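/- arXiv:1307.7445 — 2 statements merged into one kernel-verified Lean document; each statement's English description precedes it below -/
import Mathlib

section
/- In the category of prefix orders and partial history preserving maps, every inverse directed family has a projective limit (i.e., all such projective limits exist). -/
/-- Downward totality: the defining property of a prefix order. -/
def DownTotal {U : Type*} (le : U → U → Prop) : Prop :=
  ∀ a b c : U, le a c → le b c → le a b ∨ le b a

/-- A relation is a prefix order: reflexive, transitive, antisymmetric, downward total. -/
def IsPrefixOrder {U : Type*} (le : U → U → Prop) : Prop :=
  (∀ a, le a a) ∧ (∀ a b c, le a b → le b c → le a c) ∧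
  (∀ a b, le a b → le b a → a = b) ∧ DownTotal le

/-- A partial function has prefix-closed domain. -/
def PrefixClosedDom {U V : Type*} (leU : U → U → Prop) (f : U →. V) : Prop :=
  ∀ u v : U, u ∈ f.Dom → leU v u → v ∈ f.Dom

/-- A partial function is history preserving: f(u⁻) = f(u)⁻ for u in its domain. -/
def HistPres {U V : Type*} (leU : U → U → Prop) (leV : V → V → Prop) (f : U →. V) : Prop :=
  ∀ (u : U) (h : u ∈ f.Dom), f.image {v | leU v u} = {w | leV w (f.fn u h)}

/-- Partial history preserving map with prefix-closed domain. -/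
def IsPHP {U V : Type*} (leU : U → U → Prop) (leV : V → V → Prop) (f : U →. V) : Prop :=
  PrefixClosedDom leU f ∧ HistPres leU leV f

universe u v

variable {I : Type u} [Preorder I] {U : I → Type v} [∀ i, PartialOrder (U i)]

/-- An inverse directed family of partial history preserving maps between prefix orders. -/
def InvDirFam (f : ∀ i j : I, i ≤ j → (U j →. U i)) : Prop :=
  (∀ i : I, f i i le_rfl = PFun.id (U i)) ∧
  (∀ (i j k : I) (hij : i ≤ j) (hjk : j ≤ k),
      f i k (hij.trans hjk) = (f i j hij).comp (f j k hjk)) ∧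
  (∀ (i j : I) (h : i ≤ j), IsPHP (· ≤ ·) (· ≤ ·) (f i j h))

/-- A limit execution of an inverse directed family: a nonempty, compatible,
downward-closed and cofinally extending subset of the disjoint union of the U i. -/
def IsLimitExec (f : ∀ i j : I, i ≤ j → (U j →. U i)) (H : Set (Σ i : I, U i)) : Prop :=
  H.Nonempty ∧
  (∀ (i j : I) (h : i ≤ j) (u : U i) (v : U j),
      Sigma.mk i u ∈ H → Sigma.mk j v ∈ H → u ∈ f i j h v) ∧
  (∀ (i j : I) (h : i ≤ j) (v : U j) (u : U i),
      Sigma.mk j v ∈ H → u ∈ f i j h v → Sigma.mk i u ∈ H) ∧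
  (∀ (i j : I) (h : i ≤ j) (u : U i), Sigma.mk i u ∈ H → ∃ v : U j, Sigma.mk j v ∈ H)

/-- The order ⊑ on limit executions: componentwise comparison wherever both are defined. -/
def SqLe (H K : Set (Σ i : I, U i)) : Prop :=
  ∀ (i : I) (u v : U i), Sigma.mk i u ∈ H → Sigma.mk i v ∈ K → u ≤ v

/-- The projection π i, sending a limit execution to its unique element in U i, if any. -/
noncomputable def proj (f : ∀ i j : I, i ≤ j → (U j →. U i)) (i : I) :
    {H : Set (Σ i : I, U i) // IsLimitExec f H} →. U i :=
  fun H => ⟨∃ u : U i, Sigma.mk i u ∈ H.1, fun h => h.choose⟩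

/-!
Limit executions (compatible threads through the family) ordered componentwise are not enough:
an inverse limit of nonempty sets may be empty, so a prefix of a component of a limit execution
need not lie on any limit execution below it, and the projections would not be history
preserving. A point of the limit is therefore a chain of limit executions with a greatest
element that contains, below each member, a witness for every prefix of each of its components;
chains are ordered by being an initial segment of one another. Directedness makes the
componentwise order on limit executions antisymmetric and transitive, which makes this a prefix
order. A cone `ρ` sends `w` to the chain of the value sets of `ρ` at the predecessors of `w`, and
history preservation forces every mediating map to do the same.
-/

theorem PFun.mem_comp_iff {A B C : Type*} {g : B →. C} {h : A →. B} {a : A} {c : C} :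
    c ∈ g.comp h a ↔ ∃ b ∈ h a, c ∈ g b :=
  Part.mem_bind_iff

section HistPres

variable {A B : Type*} {leA : A → A → Prop} {leB : B → B → Prop} {g : A →. B}

theorem histPres_iff : HistPres leA leB g ↔
    ∀ a b, b ∈ g a → ∀ c, (∃ a', leA a' a ∧ c ∈ g a') ↔ leB c b := by
  refine forall_congr' fun a => ⟨fun h b hb c => ?_, fun h ha => ?_⟩
  · obtain ⟨ha, rfl⟩ := hb
    exact Set.ext_iff.1 (h ha) c
  · exact Set.ext fun c => h (g.fn a ha) (Part.get_mem ha) c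

theorem HistPres.le_of_mem (hg : HistPres leA leB g) {a a' : A} {b b' : B} (ha : leA a a')
    (hb : b ∈ g a) (hb' : b' ∈ g a') : leB b b' :=
  (histPres_iff.1 hg a' b' hb' b).1 ⟨a, ha, hb⟩

theorem HistPres.exists_of_le (hg : HistPres leA leB g) {a : A} {b c : B} (hb : b ∈ g a)
    (hc : leB c b) : ∃ a', leA a' a ∧ c ∈ g a' :=
  (histPres_iff.1 hg a b hb c).2 hc

end HistPres

section LimitExec

variable {f : ∀ i j : I, i ≤ j → (U j →. U i)} {H : Set (Σ i : I, U i)}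

theorem InvDirFam.eq_of_mem_self (hf : InvDirFam f) {i : I} {u v : U i}
    (h : u ∈ f i i le_rfl v) : u = v := by
  rwa [hf.1 i, PFun.id_apply, Part.mem_some_iff] at h

namespace IsLimitExec

variable (hH : IsLimitExec f H) {i j : I} {u : U i} {v : U j}
include hH

section
omit [∀ i, PartialOrder (U i)]

theorem mem_apply (h : i ≤ j) (hu : Sigma.mk i u ∈ H) (hv : Sigma.mk j v ∈ H) :
    u ∈ f i j h v :=
  hH.2.1 i j h u v hu hv

theorem mem_of_mem_apply (h : i ≤ j) (hv : Sigma.mk j v ∈ H) (hu : u ∈ f i j h v) :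
    Sigma.mk i u ∈ H :=
  hH.2.2.1 i j h v u hv hu

theorem exists_mem_of_le (h : i ≤ j) (hu : Sigma.mk i u ∈ H) : ∃ v : U j, Sigma.mk j v ∈ H :=
  hH.2.2.2 i j h u hu

theorem exists_mem_ge (hdir : ∀ i j : I, ∃ k, i ≤ k ∧ j ≤ k) (i : I) :
    ∃ k, ∃ _ : i ≤ k, ∃ w : U k, Sigma.mk k w ∈ H := by
  obtain ⟨⟨j, v⟩, hv⟩ := hH.1
  obtain ⟨k, hik, hjk⟩ := hdir i j
  exact ⟨k, hik, hH.exists_mem_of_le hjk hv⟩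

end

theorem eq_of_mem (hf : InvDirFam f) {u' : U i} (hu : Sigma.mk i u ∈ H)
    (hu' : Sigma.mk i u' ∈ H) : u = u' :=
  hf.eq_of_mem_self (hH.mem_apply le_rfl hu hu')

end IsLimitExec

theorem sqLe_refl (hf : InvDirFam f) (hH : IsLimitExec f H) : SqLe H H :=
  fun _ _ _ hu hv => (hH.eq_of_mem hf hu hv).le

variable (hdir : ∀ i j : I, ∃ k, i ≤ k ∧ j ≤ k) (hf : InvDirFam f)
variable {A B C : Set (Σ i : I, U i)} (hA : IsLimitExec f A) (hB : IsLimitExec f B)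

include hdir hf hA hB in
theorem SqLe.exists_mem (hAB : SqLe A B) {i : I} {u : U i} (hu : Sigma.mk i u ∈ B) :
    ∃ y : U i, Sigma.mk i y ∈ A := by
  obtain ⟨k, hik, a, ha⟩ := hA.exists_mem_ge hdir i
  obtain ⟨b, hb⟩ := hB.exists_mem_of_le hik hu
  have hbdom : b ∈ (f i k hik).Dom := Part.dom_iff_mem.2 ⟨u, hB.mem_apply hik hu hb⟩
  have hadom : a ∈ (f i k hik).Dom := (hf.2.2 i k hik).1 b a hbdom (hAB k a b ha hb)
  exact ⟨_, hA.mem_of_mem_apply hik ha (Part.get_mem hadom)⟩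

include hdir hf hA hB in
theorem SqLe.trans (hC : IsLimitExec f C) (hAB : SqLe A B) (hBC : SqLe B C) : SqLe A C := by
  intro i u w hu hw
  obtain ⟨k, hik, b, hb⟩ := hB.exists_mem_ge hdir i
  obtain ⟨a, ha⟩ := hA.exists_mem_of_le hik hu
  obtain ⟨c, hc⟩ := hC.exists_mem_of_le hik hw
  exact (hf.2.2 i k hik).2.le_of_mem ((hAB k a b ha hb).trans (hBC k b c hb hc))
    (hA.mem_apply hik hu ha) (hC.mem_apply hik hw hc)

include hdir in
theorem subset_of_sqLe_of_sqLe (hA : IsLimitExec f A) (hB : IsLimitExec f B)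
    (hAB : SqLe A B) (hBA : SqLe B A) : A ⊆ B := by
  rintro ⟨i, u⟩ hu
  obtain ⟨k, hik, b, hb⟩ := hB.exists_mem_ge hdir i
  obtain ⟨a, ha⟩ := hA.exists_mem_of_le hik hu
  have hab : a = b := le_antisymm (hAB k a b ha hb) (hBA k b a hb ha)
  exact hB.mem_of_mem_apply hik hb (hab ▸ hA.mem_apply hik hu ha)

include hdir hA hB in
theorem SqLe.antisymm (hAB : SqLe A B) (hBA : SqLe B A) : A = B :=
  (subset_of_sqLe_of_sqLe hdir hA hB hAB hBA).antisymm
    (subset_of_sqLe_of_sqLe hdir hB hA hBA hAB)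

end LimitExec

structure IsHistoryChain (f : ∀ i j : I, i ≤ j → (U j →. U i))
    (C : Set (Set (Σ i : I, U i))) : Prop where
  isLimitExec : ∀ G ∈ C, IsLimitExec f G
  exists_top : ∃ M ∈ C, ∀ G ∈ C, SqLe G M
  total : ∀ G ∈ C, ∀ G' ∈ C, SqLe G G' ∨ SqLe G' G
  full : ∀ G ∈ C, ∀ (i : I) (u w : U i), Sigma.mk i u ∈ G → w ≤ u →
    ∃ G' ∈ C, SqLe G' G ∧ Sigma.mk i w ∈ G'

def initSeg (C : Set (Set (Σ i : I, U i))) (G : Set (Σ i : I, U i)) :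
    Set (Set (Σ i : I, U i)) :=
  {G' ∈ C | SqLe G' G}

section HistoryChain

variable {f : ∀ i j : I, i ≤ j → (U j →. U i)} {C : Set (Set (Σ i : I, U i))}

namespace IsHistoryChain

variable (h : IsHistoryChain f C)
include h

noncomputable def top : Set (Σ i : I, U i) := h.exists_top.choose

theorem top_mem : h.top ∈ C := h.exists_top.choose_spec.1

theorem le_top {G : Set (Σ i : I, U i)} (hG : G ∈ C) : SqLe G h.top :=
  h.exists_top.choose_spec.2 G hG

theorem isLimitExec_top : IsLimitExec f h.top := h.isLimitExec _ h.top_mem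

variable (hdir : ∀ i j : I, ∃ k, i ≤ k ∧ j ≤ k) (hf : InvDirFam f)

include hdir in
theorem top_eq {M : Set (Σ i : I, U i)} (hM : M ∈ C) (hmax : ∀ G ∈ C, SqLe G M) :
    h.top = M :=
  SqLe.antisymm hdir h.isLimitExec_top (h.isLimitExec _ hM) (hmax _ h.top_mem) (h.le_top hM)

include hdir hf in
protected theorem initSeg {G : Set (Σ i : I, U i)} (hG : G ∈ C) :
    IsHistoryChain f (initSeg C G) where
  isLimitExec G' hG' := h.isLimitExec G' hG'.1
  exists_top := ⟨G, ⟨hG, sqLe_refl hf (h.isLimitExec G hG)⟩, fun _ hG' => hG'.2⟩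
  total G' hG' G'' hG'' := h.total G' hG'.1 G'' hG''.1
  full G' hG' i u w hu hwu := by
    obtain ⟨G'', hG'', hle, hw⟩ := h.full G' hG'.1 i u w hu hwu
    exact ⟨G'', ⟨hG'', hle.trans hdir hf (h.isLimitExec _ hG'') (h.isLimitExec _ hG'.1)
      (h.isLimitExec G hG) hG'.2⟩, hle, hw⟩

include hdir hf in
theorem top_initSeg {G : Set (Σ i : I, U i)} (hG : G ∈ C) :
    (h.initSeg hdir hf hG).top = G :=
  (h.initSeg hdir hf hG).top_eq hdir ⟨hG, sqLe_refl hf (h.isLimitExec G hG)⟩ fun _ hG' => hG'.2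

include hdir hf in
theorem initSeg_initSeg {G₁ G₂ : Set (Σ i : I, U i)} (hG₁ : G₁ ∈ C) (hG₂ : G₂ ∈ C)
    (h₁₂ : SqLe G₁ G₂) : initSeg (initSeg C G₂) G₁ = initSeg C G₁ := by
  ext G
  refine ⟨fun hG => ⟨hG.1.1, hG.2⟩, fun hG => ⟨⟨hG.1, ?_⟩, hG.2⟩⟩
  exact hG.2.trans hdir hf (h.isLimitExec G hG.1) (h.isLimitExec _ hG₁) (h.isLimitExec _ hG₂) h₁₂

end IsHistoryChain

variable (f) in
abbrev HistoryChain := {C : Set (Set (Σ i : I, U i)) // IsHistoryChain f C}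

namespace HistoryChain

protected def Le (C C' : HistoryChain f) : Prop :=
  ∃ G ∈ C'.1, C.1 = initSeg C'.1 G

variable (hdir : ∀ i j : I, ∃ k, i ≤ k ∧ j ≤ k) (hf : InvDirFam f) {C C' C'' : HistoryChain f}

include hdir hf in
theorem le_iff_top : C.Le C' ↔ C.2.top ∈ C'.1 ∧ C.1 = initSeg C'.1 C.2.top := by
  refine ⟨fun ⟨G, hG, hC⟩ => ?_, fun h => ⟨_, h⟩⟩
  have hGC : G ∈ C.1 := hC ▸ ⟨hG, sqLe_refl hf (C'.2.isLimitExec G hG)⟩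
  have htop : C.2.top = G := C.2.top_eq hdir hGC fun G' hG' => (hC ▸ hG').2
  exact htop ▸ ⟨hG, hC⟩

theorem le_refl : C.Le C :=
  ⟨C.2.top, C.2.top_mem, Set.ext fun _ => ⟨fun hG => ⟨hG, C.2.le_top hG⟩, fun hG => hG.1⟩⟩

include hdir hf in
theorem le_trans (h₁ : C.Le C') (h₂ : C'.Le C'') : C.Le C'' := by
  obtain ⟨G₁, hG₁, e₁⟩ := h₁
  obtain ⟨G₂, hG₂, e₂⟩ := h₂
  rw [e₂] at hG₁ e₁
  exact ⟨G₁, hG₁.1, by rw [e₁, C''.2.initSeg_initSeg hdir hf hG₁.1 hG₂ hG₁.2]⟩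

include hdir hf in
theorem le_antisymm (h₁ : C.Le C') (h₂ : C'.Le C) : C = C' := by
  obtain ⟨hM, e₁⟩ := (le_iff_top hdir hf).1 h₁
  obtain ⟨hM', e₂⟩ := (le_iff_top hdir hf).1 h₂
  rw [e₂] at hM
  rw [e₁] at hM'
  have htop : C.2.top = C'.2.top :=
    SqLe.antisymm hdir C.2.isLimitExec_top C'.2.isLimitExec_top hM.2 hM'.2
  apply Subtype.ext
  rw [e₁, e₂, htop]
  exact Set.ext fun G => ⟨fun hG => hG.1, fun hG => ⟨hG, hG.2⟩⟩

include hdir hf in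
theorem le_or_le_of_le (h₁ : C.Le C'') (h₂ : C'.Le C'') : C.Le C' ∨ C'.Le C := by
  obtain ⟨hM₁, e₁⟩ := (le_iff_top hdir hf).1 h₁
  obtain ⟨hM₂, e₂⟩ := (le_iff_top hdir hf).1 h₂
  rcases C''.2.total _ hM₁ _ hM₂ with hle | hle
  · refine .inl ⟨C.2.top, e₂ ▸ ⟨hM₁, hle⟩, e₁.trans ?_⟩
    rw [e₂, C''.2.initSeg_initSeg hdir hf hM₁ hM₂ hle]
  · refine .inr ⟨C'.2.top, e₁ ▸ ⟨hM₂, hle⟩, e₂.trans ?_⟩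
    rw [e₁, C''.2.initSeg_initSeg hdir hf hM₂ hM₁ hle]

include hdir hf in
theorem isPrefixOrder_le : IsPrefixOrder (HistoryChain.Le (f := f)) :=
  ⟨fun _ => le_refl, fun _ _ _ => le_trans hdir hf, fun _ _ => le_antisymm hdir hf,
    fun _ _ _ => le_or_le_of_le hdir hf⟩

end HistoryChain

end HistoryChain

section Projection

variable {f : ∀ i j : I, i ≤ j → (U j →. U i)}
variable (hdir : ∀ i j : I, ∃ k, i ≤ k ∧ j ≤ k) (hf : InvDirFam f)

include hf in
theorem mem_proj_iff {i : I} {H : {H : Set (Σ i : I, U i) // IsLimitExec f H}} {u : U i} :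
    u ∈ proj f i H ↔ Sigma.mk i u ∈ H.1 :=
  ⟨fun ⟨hd, hu⟩ => hu ▸ hd.choose_spec,
    fun hu => ⟨⟨u, hu⟩, H.2.eq_of_mem hf (⟨u, hu⟩ : ∃ u, Sigma.mk i u ∈ H.1).choose_spec hu⟩⟩

variable (f) in
noncomputable def chainProj (i : I) : HistoryChain f →. U i :=
  fun C => proj f i ⟨C.2.top, C.2.isLimitExec_top⟩

include hf in
theorem mem_chainProj_iff {i : I} {C : HistoryChain f} {u : U i} :
    u ∈ chainProj f i C ↔ Sigma.mk i u ∈ C.2.top :=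
  mem_proj_iff hf

include hdir hf in
theorem isPHP_chainProj (i : I) : IsPHP HistoryChain.Le (· ≤ ·) (chainProj f i) := by
  refine ⟨fun C C' hC hC' => ?_, histPres_iff.2 fun C u hu w => ⟨?_, fun hwu => ?_⟩⟩
  · obtain ⟨u, hu⟩ := Part.dom_iff_mem.1 hC
    have htop := ((HistoryChain.le_iff_top hdir hf).1 hC').1
    exact (C.2.le_top htop).exists_mem hdir hf C'.2.isLimitExec_top C.2.isLimitExec_top
      ((mem_chainProj_iff hf).1 hu)
  · rintro ⟨C', hC', hw⟩
    exact C.2.le_top ((HistoryChain.le_iff_top hdir hf).1 hC').1 i w u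
      ((mem_chainProj_iff hf).1 hw) ((mem_chainProj_iff hf).1 hu)
  · obtain ⟨G, hG, -, hw⟩ := C.2.full _ C.2.top_mem i u w ((mem_chainProj_iff hf).1 hu) hwu
    refine ⟨⟨initSeg C.1 G, C.2.initSeg hdir hf hG⟩, ⟨G, hG, rfl⟩, (mem_chainProj_iff hf).2 ?_⟩
    rwa [C.2.top_initSeg hdir hf hG]

include hf in
theorem chainProj_eq_comp {i j : I} (hij : i ≤ j) :
    chainProj f i = (f i j hij).comp (chainProj f j) := by
  refine PFun.ext fun C u => ?_
  simp only [PFun.mem_comp_iff, mem_chainProj_iff hf]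
  have hC := C.2.isLimitExec_top
  refine ⟨fun hu => ?_, fun ⟨v, hv, hu⟩ => hC.mem_of_mem_apply hij hv hu⟩
  obtain ⟨v, hv⟩ := hC.exists_mem_of_le hij hu
  exact ⟨v, hv, hC.mem_apply hij hu hv⟩

end Projection

section UniversalProperty

variable {f : ∀ i j : I, i ≤ j → (U j →. U i)} {W : Type*} {leW : W → W → Prop}
  {ρ : ∀ i : I, W →. U i}

def valuesAt (ρ : ∀ i : I, W →. U i) (w : W) : Set (Σ i : I, U i) :=
  {p | p.2 ∈ ρ p.1 w}

def chainAt (leW : W → W → Prop) (ρ : ∀ i : I, W →. U i) (w : W) :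
    Set (Set (Σ i : I, U i)) :=
  {G | ∃ v, leW v w ∧ (∃ i, (ρ i v).Dom) ∧ G = valuesAt ρ v}

variable (hdir : ∀ i j : I, ∃ k, i ≤ k ∧ j ≤ k) (hf : InvDirFam f)
  (hρf : ∀ (i j : I) (h : i ≤ j), ρ i = (f i j h).comp (ρ j))
  (hρ : ∀ i : I, IsPHP leW (· ≤ ·) (ρ i)) (hW : IsPrefixOrder leW)

omit [∀ i, PartialOrder (U i)] in
include hρf in
theorem isLimitExec_valuesAt {w : W} (hw : ∃ i, (ρ i w).Dom) :
    IsLimitExec f (valuesAt ρ w) := by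
  refine ⟨?_, fun i j h u v hu hv => ?_, fun i j h v u hv hu => ?_, fun i j h u hu => ?_⟩
  · obtain ⟨i, hd⟩ := hw
    exact ⟨⟨i, _⟩, Part.get_mem hd⟩
  · have hu : u ∈ (f i j h).comp (ρ j) w := hρf i j h ▸ hu
    obtain ⟨v', hv', hu⟩ := PFun.mem_comp_iff.1 hu
    rwa [Part.mem_unique hv' hv] at hu
  · show u ∈ ρ i w
    exact hρf i j h ▸ PFun.mem_comp_iff.2 ⟨v, hv, hu⟩
  · have hu : u ∈ (f i j h).comp (ρ j) w := hρf i j h ▸ hu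
    obtain ⟨v, hv, -⟩ := PFun.mem_comp_iff.1 hu
    exact ⟨v, hv⟩


omit [Preorder I] in
include hρ in
theorem valuesAt_mono {v w : W} (hvw : leW v w) : SqLe (valuesAt ρ v) (valuesAt ρ w) :=
  fun i _ _ ha hb => (hρ i).2.le_of_mem hvw ha hb

include hρf hρ hW in
theorem isHistoryChain_chainAt {w : W} (hw : ∃ i, (ρ i w).Dom) :
    IsHistoryChain f (chainAt leW ρ w) where
  isLimitExec := by
    rintro _ ⟨v, -, hv, rfl⟩
    exact isLimitExec_valuesAt hρf hv
  exists_top := ⟨valuesAt ρ w, ⟨w, hW.1 w, hw, rfl⟩, by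
    rintro _ ⟨v, hvw, -, rfl⟩
    exact valuesAt_mono hρ hvw⟩
  total := by
    rintro _ ⟨v, hvw, -, rfl⟩ _ ⟨v', hv'w, -, rfl⟩
    exact (hW.2.2.2 v v' w hvw hv'w).imp (valuesAt_mono hρ) (valuesAt_mono hρ)
  full := by
    rintro _ ⟨v, hvw, -, rfl⟩ i u u' hu hu'
    obtain ⟨v', hv'v, hu'⟩ := (hρ i).2.exists_of_le hu hu'
    exact ⟨valuesAt ρ v', ⟨v', hW.2.1 v' v w hv'v hvw, ⟨i, Part.dom_iff_mem.2 ⟨u', hu'⟩⟩, rfl⟩,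
      valuesAt_mono hρ hv'v, hu'⟩

include hdir hρf hρ hW in
theorem chainAt_eq_initSeg {v w : W} (hvw : leW v w) (hv : ∃ i, (ρ i v).Dom) :
    chainAt leW ρ v = initSeg (chainAt leW ρ w) (valuesAt ρ v) := by
  ext G
  constructor
  · rintro ⟨v', hv'v, hv', rfl⟩
    exact ⟨⟨v', hW.2.1 v' v w hv'v hvw, hv', rfl⟩, valuesAt_mono hρ hv'v⟩
  · rintro ⟨⟨v', hv'w, hv', rfl⟩, hle⟩
    rcases hW.2.2.2 v' v w hv'w hvw with hv'v | hvv'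
    · exact ⟨v', hv'v, hv', rfl⟩
    · have : valuesAt ρ v' = valuesAt ρ v := SqLe.antisymm hdir (isLimitExec_valuesAt hρf hv')
        (isLimitExec_valuesAt hρf hv) hle (valuesAt_mono hρ hvv')
      exact ⟨v, hW.1 v, hv, this⟩

include hdir hρ hW in
theorem IsHistoryChain.top_eq_valuesAt {C : Set (Set (Σ i : I, U i))} (h : IsHistoryChain f C)
    {w : W} (hC : C = chainAt leW ρ w) (hw : ∃ i, (ρ i w).Dom) : h.top = valuesAt ρ w := by
  subst hC
  refine h.top_eq hdir ⟨w, hW.1 w, hw, rfl⟩ ?_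
  rintro _ ⟨v, hvw, -, rfl⟩
  exact valuesAt_mono hρ hvw

noncomputable def lift (hρf : ∀ (i j : I) (h : i ≤ j), ρ i = (f i j h).comp (ρ j))
    (hρ : ∀ i : I, IsPHP leW (· ≤ ·) (ρ i)) (hW : IsPrefixOrder leW) : W →. HistoryChain f :=
  fun w => ⟨∃ i, (ρ i w).Dom, fun hw => ⟨chainAt leW ρ w, isHistoryChain_chainAt hρf hρ hW hw⟩⟩

theorem mem_lift_iff {w : W} {C : HistoryChain f} :
    C ∈ lift hρf hρ hW w ↔ (∃ i, (ρ i w).Dom) ∧ C.1 = chainAt leW ρ w :=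
  ⟨fun ⟨hw, hC⟩ => ⟨hw, hC ▸ rfl⟩, fun ⟨hw, hC⟩ => ⟨hw, (Subtype.ext hC).symm⟩⟩

include hdir hf in
theorem isPHP_lift : IsPHP leW HistoryChain.Le (lift hρf hρ hW) := by
  refine ⟨fun w v ⟨i, hw⟩ hvw => ⟨i, (hρ i).1 w v hw hvw⟩, histPres_iff.2 fun w C hC C' => ?_⟩
  obtain ⟨hw, hCw⟩ := (mem_lift_iff hρf hρ hW).1 hC
  constructor
  · rintro ⟨v, hvw, hC'⟩
    obtain ⟨hv, hC'v⟩ := (mem_lift_iff hρf hρ hW).1 hC'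
    refine ⟨valuesAt ρ v, hCw ▸ ⟨v, hvw, hv, rfl⟩, ?_⟩
    rw [hC'v, hCw, chainAt_eq_initSeg hdir hρf hρ hW hvw hv]
  · intro hC'C
    obtain ⟨htop, hC'⟩ := (HistoryChain.le_iff_top hdir hf).1 hC'C
    obtain ⟨v, hvw, hv, hvtop⟩ := hCw ▸ htop
    refine ⟨v, hvw, (mem_lift_iff hρf hρ hW).2 ⟨hv, ?_⟩⟩
    rw [hC', hCw, hvtop, chainAt_eq_initSeg hdir hρf hρ hW hvw hv]

include hdir hf in
theorem chainProj_comp_lift (i : I) : ρ i = (chainProj f i).comp (lift hρf hρ hW) := by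
  refine PFun.ext fun w u => ?_
  rw [PFun.mem_comp_iff]
  constructor
  · intro hu
    have hw : ∃ i, (ρ i w).Dom := ⟨i, Part.dom_iff_mem.2 ⟨u, hu⟩⟩
    have hC := isHistoryChain_chainAt hρf hρ hW hw
    refine ⟨⟨_, hC⟩, (mem_lift_iff hρf hρ hW).2 ⟨hw, rfl⟩, (mem_chainProj_iff hf).2 ?_⟩
    rwa [hC.top_eq_valuesAt hdir hρ hW rfl hw]
  · rintro ⟨C, hC, hu⟩
    obtain ⟨hw, hCw⟩ := (mem_lift_iff hρf hρ hW).1 hC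
    have hu := (mem_chainProj_iff hf).1 hu
    rwa [C.2.top_eq_valuesAt hdir hρ hW hCw hw] at hu

end UniversalProperty

section Uniqueness

variable {f : ∀ i j : I, i ≤ j → (U j →. U i)} {W : Type*} {leW : W → W → Prop}
  {ρ : ∀ i : I, W →. U i} {m : W →. HistoryChain f}
  (hdir : ∀ i j : I, ∃ k, i ≤ k ∧ j ≤ k) (hf : InvDirFam f)
  (hm : IsPHP leW HistoryChain.Le m) (hmρ : ∀ i : I, ρ i = (chainProj f i).comp m)

include hf hmρ in
theorem top_eq_valuesAt_of_mem {w : W} {C : HistoryChain f} (hC : C ∈ m w) :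
    C.2.top = valuesAt ρ w := by
  ext ⟨i, u⟩
  change _ ↔ u ∈ ρ i w
  rw [hmρ i, PFun.mem_comp_iff]
  refine ⟨fun hu => ⟨C, hC, (mem_chainProj_iff hf).2 hu⟩, fun ⟨C', hC', hu⟩ => ?_⟩
  rw [Part.mem_unique hC' hC] at hu
  exact (mem_chainProj_iff hf).1 hu

include hf hmρ in
theorem exists_dom_of_mem {w : W} {C : HistoryChain f} (hC : C ∈ m w) : ∃ i, (ρ i w).Dom := by
  obtain ⟨⟨i, u⟩, hu⟩ := C.2.isLimitExec_top.1
  rw [top_eq_valuesAt_of_mem hf hmρ hC] at hu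
  exact ⟨i, Part.dom_iff_mem.2 ⟨u, hu⟩⟩

include hmρ in
theorem mem_dom_of_dom {w : W} {i : I} (hw : (ρ i w).Dom) : w ∈ m.Dom :=
  PFun.preimage_subset_dom _ _ (by rwa [← PFun.dom_comp, ← hmρ i])

include hdir hf hm hmρ in
theorem eq_chainAt_of_mem {w : W} {C : HistoryChain f} (hC : C ∈ m w) :
    C.1 = chainAt leW ρ w := by
  have hhist := histPres_iff.1 hm.2 w C hC
  ext G
  constructor
  · intro hG
    obtain ⟨v, hvw, hv⟩ := (hhist ⟨_, C.2.initSeg hdir hf hG⟩).2 ⟨G, hG, rfl⟩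
    refine ⟨v, hvw, exists_dom_of_mem hf hmρ hv, ?_⟩
    rw [← top_eq_valuesAt_of_mem hf hmρ hv, C.2.top_initSeg hdir hf hG]
  · rintro ⟨v, hvw, ⟨i, hv⟩, rfl⟩
    obtain ⟨C', hC'⟩ := Part.dom_iff_mem.1 (mem_dom_of_dom hmρ hv)
    have hC'C := (hhist C').1 ⟨v, hvw, hC'⟩
    rw [← top_eq_valuesAt_of_mem hf hmρ hC']
    exact ((HistoryChain.le_iff_top hdir hf).1 hC'C).1

include hdir hf hm hmρ in
theorem eq_lift (hρf : ∀ (i j : I) (h : i ≤ j), ρ i = (f i j h).comp (ρ j))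
    (hρ : ∀ i : I, IsPHP leW (· ≤ ·) (ρ i)) (hW : IsPrefixOrder leW) : m = lift hρf hρ hW := by
  refine PFun.ext fun w C => ⟨fun hC => ?_, fun hC => ?_⟩
  · exact (mem_lift_iff hρf hρ hW).2
      ⟨exists_dom_of_mem hf hmρ hC, eq_chainAt_of_mem hdir hf hm hmρ hC⟩
  · obtain ⟨⟨i, hw⟩, hCw⟩ := (mem_lift_iff hρf hρ hW).1 hC
    obtain ⟨C', hC'⟩ := Part.dom_iff_mem.1 (mem_dom_of_dom hmρ hw)
    have : C' = C := Subtype.ext ((eq_chainAt_of_mem hdir hf hm hmρ hC').trans hCw.symm)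
    exact this ▸ hC'

end Uniqueness

/-- in the category of prefix orders and partial history preserving maps,
every inverse directed family has a projective limit. -/
theorem stmt9 (hdir : ∀ i j : I, ∃ k, i ≤ k ∧ j ≤ k)
    (f : ∀ i j : I, i ≤ j → (U j →. U i)) (hf : InvDirFam f) :
    ∃ (L : Type (max u v)) (leL : L → L → Prop), IsPrefixOrder leL ∧
      ∃ π : ∀ i : I, L →. U i,
        (∀ i : I, IsPHP leL (· ≤ ·) (π i)) ∧
        (∀ (i j : I) (h : i ≤ j), π i = (f i j h).comp (π j)) ∧
        (∀ (W : Type (max u v)) (leW : W → W → Prop), IsPrefixOrder leW →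
          ∀ ρ : ∀ i : I, W →. U i,
            (∀ i : I, IsPHP leW (· ≤ ·) (ρ i)) →
            (∀ (i j : I) (h : i ≤ j), ρ i = (f i j h).comp (ρ j)) →
            ∃! m : W →. L, IsPHP leW leL m ∧ ∀ i : I, ρ i = (π i).comp m) := by
  refine ⟨HistoryChain f, HistoryChain.Le, HistoryChain.isPrefixOrder_le hdir hf, chainProj f,
    isPHP_chainProj hdir hf, fun i j h => chainProj_eq_comp hf h, ?_⟩
  intro W leW hW ρ hρ hρf
  exact ⟨lift hρf hρ hW, ⟨isPHP_lift hdir hf hρf hρ hW, chainProj_comp_lift hdir hf hρf hρ hW⟩,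
    fun m ⟨hm, hmρ⟩ => eq_lift hdir hf hm hmρ hρf hρ hW⟩
end

section
/- Let Y = {(k,l) ∈ ℕ × ℕ | l ≤ k} ∪ {⊥} with ⊥ below everything and (k,l) ⪯ (k',l') iff k = k' and l ≤ l'. Let Y(n) = {(k,l) | l ≤ k < n} ∪ {⊥} with partial identity maps f_{n,m} : Y(m) → Y(n) defined exactly on Y(n) for n ≤ m. Then the projective limit of this inverse directed family is isomorphic to Y. -/
/-- The order on (ℕ × ℕ) ∪ {⊥}: ⊥ = none below everything and
(k,l) ⪯ (k',l') iff k = k' and l ≤ l'. -/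
def XLe : Option (ℕ × ℕ) → Option (ℕ × ℕ) → Prop
  | none, _ => True
  | some _, none => False
  | some (k, l), some (k', l') => k = k' ∧ l ≤ l'

/-- The prefix order Y = {(k,l) | l ≤ k} ∪ {⊥}. -/
def YT : Type := {x : Option (ℕ × ℕ) // x = none ∨ ∃ k l : ℕ, x = some (k, l) ∧ l ≤ k}

/-- The order on Y, induced from X. -/
def YLe (a b : YT) : Prop := XLe a.1 b.1

/-- The subset Y(n) = {(k,l) | l ≤ k < n} ∪ {⊥} of Y. -/
def YS (n : ℕ) : Set YT :=
  {y | y.1 = none ∨ ∃ k l : ℕ, y.1 = some (k, l) ∧ l ≤ k ∧ k < n}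

/-- The partial identity f_{n,m} : Y(m) → Y(n), defined exactly on Y(n). -/
def fmap (n m : ℕ) : ↥(YS m) →. ↥(YS n) :=
  fun y => ⟨y.1 ∈ YS n, fun h => ⟨y.1, h⟩⟩

/-- The partial identity projection Y → Y(n), defined exactly on Y(n). -/
def fproj (n : ℕ) : YT →. ↥(YS n) :=
  fun y => ⟨y ∈ YS n, fun h => ⟨y, h⟩⟩

/-!
`Y` is the increasing union of the prefix-closed sets `Y(n)`, and all the maps involved are
partial identities `PFun.toSubtype`. Given a compatible family `ρ n : W →. Y(n)`, the values
`ρ n w` that are defined all agree as points of `Y` (compare them at level `max n m`), so they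
glue to one partial map `W →. Y`. It preserves histories because any two of its values can be
compared inside a single `Y(n)`, where `ρ n` preserves histories and which is prefix-closed. It is
unique because every point of `Y` lies in some `Y(n)`.
-/

theorem IsPrefixOrder.comap {α β : Type*} {le : β → β → Prop} (h : IsPrefixOrder le)
    (f : α → β) (hf : Function.Injective f) : IsPrefixOrder (fun a b => le (f a) (f b)) :=
  ⟨fun a => h.1 (f a), fun _ _ _ => h.2.1 _ _ _, fun _ _ hab hba => hf (h.2.2.1 _ _ hab hba),
    fun _ _ _ => h.2.2.2 _ _ _⟩

theorem histPres_iff_mem {U V : Type*} {leU : U → U → Prop} {leV : V → V → Prop} {f : U →. V} :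
    HistPres leU leV f ↔
      ∀ u y, y ∈ f u → ∀ y', (∃ v, leU v u ∧ y' ∈ f v) ↔ leV y' y := by
  refine ⟨fun h u y hy y' => ?_, fun h u hu => Set.ext fun y' => ?_⟩
  · have := Set.ext_iff.1 (h u (Part.dom_iff_mem.2 ⟨y, hy⟩)) y'
    rwa [PFun.mem_image, PFun.fn_apply, Part.get_eq_of_mem hy] at this
  · exact (PFun.mem_image _ _ _).trans (h u _ (Part.get_mem hu) y')

def DownClosed {β : Type*} (le : β → β → Prop) (t : Set β) : Prop :=
  ∀ ⦃a b⦄, b ∈ t → le a b → a ∈ t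

namespace PFun

variable {α β γ : Type*}

theorem mem_toSubtype_comp_iff {t : Set β} (f : γ → β) (g : α →. γ) {a : α} {y : t} :
    y ∈ (toSubtype (· ∈ t) f).comp g a ↔ ∃ x ∈ g a, f x = y := by
  rw [comp_apply, Part.mem_bind_iff (g := toSubtype (· ∈ t) f)]
  simp only [mem_toSubtype_iff, eq_comm]

theorem toSubtype_val_self (s : Set β) : toSubtype (· ∈ s) Subtype.val = PFun.id s :=
  ext fun a b => by rw [mem_toSubtype_iff, id_apply, Part.mem_some_iff, Subtype.ext_iff]

theorem toSubtype_val_comp_toSubtype {s t : Set β} (h : t ⊆ s) (f : α → β) :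
    (toSubtype (· ∈ t) Subtype.val).comp (toSubtype (· ∈ s) f) = toSubtype (· ∈ t) f := by
  refine ext fun a y => ?_
  rw [mem_toSubtype_comp_iff, mem_toSubtype_iff]
  constructor
  · rintro ⟨x, hx, hxy⟩
    rw [← hxy, ← mem_toSubtype_iff.1 hx]
  · intro hy
    exact ⟨⟨y, h y.2⟩, mem_toSubtype_iff.2 hy, rfl⟩

theorem isPHP_toSubtype {le : β → β → Prop} {t : Set β} (ht : DownClosed le t) (f : α → β)
    (hf : t ⊆ Set.range f) :
    IsPHP (fun a b => le (f a) (f b)) (fun a b : t => le a b) (toSubtype (· ∈ t) f) := by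
  refine ⟨fun u v hu hvu => ht hu hvu, histPres_iff_mem.2 fun u y hy y' => ?_⟩
  rw [mem_toSubtype_iff] at hy
  simp only [mem_toSubtype_iff, hy]
  constructor
  · rintro ⟨v, hvu, hv⟩
    rwa [hv]
  · intro hy'
    obtain ⟨v, hv⟩ := hf y'.2
    exact ⟨v, by rwa [hv], hv.symm⟩

theorem eq_of_toSubtype_comp_eq {ι W : Type*} {S : ι → Set β} (hS : ∀ y, ∃ i, y ∈ S i)
    {u u' : W →. β}
    (h : ∀ i, (toSubtype (· ∈ S i) id).comp u = (toSubtype (· ∈ S i) id).comp u') :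
    u = u' := by
  refine ext fun w y => ?_
  obtain ⟨i, hy⟩ := hS y
  have := Part.ext_iff.1 (congrFun (h i) w) ⟨y, hy⟩
  simpa only [mem_toSubtype_comp_iff, id, exists_eq_right] using this

end PFun

section Limit

variable {ι β W : Type*} [SemilatticeSup ι] {S : ι → Set β} {ρ : ∀ i, W →. S i}

def IsPFunCone (ρ : ∀ i, W →. S i) : Prop :=
  ∀ i j, i ≤ j → ρ i = (PFun.toSubtype (· ∈ S i) Subtype.val).comp (ρ j)

namespace IsPFunCone

theorem exists_mem_of_le (hρ : IsPFunCone ρ) {i j : ι} (hij : i ≤ j) {w : W} {z : S i}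
    (hz : z ∈ ρ i w) : ∃ z' ∈ ρ j w, (z' : β) = z := by
  rwa [hρ i j hij, PFun.mem_toSubtype_comp_iff] at hz

theorem coe_eq (hρ : IsPFunCone ρ) {i j : ι} {w : W} {z : S i} {z' : S j}
    (hz : z ∈ ρ i w) (hz' : z' ∈ ρ j w) : (z : β) = z' := by
  obtain ⟨x, hx, hxz⟩ := hρ.exists_mem_of_le (le_sup_left : i ≤ i ⊔ j) hz
  obtain ⟨x', hx', hxz'⟩ := hρ.exists_mem_of_le (le_sup_right : j ≤ i ⊔ j) hz'
  rw [← hxz, ← hxz', Part.mem_unique hx hx']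

theorem mem_of_mem (hρ : IsPFunCone ρ) {i j : ι} {w : W} {z : S j} (hz : z ∈ ρ j w)
    (hn : (z : β) ∈ S i) : ⟨z, hn⟩ ∈ ρ i w := by
  obtain ⟨x, hx, hxz⟩ := hρ.exists_mem_of_le (le_sup_left : j ≤ j ⊔ i) hz
  rw [hρ i (j ⊔ i) (le_sup_right : i ≤ j ⊔ i), PFun.mem_toSubtype_comp_iff]
  exact ⟨x, hx, hxz⟩

end IsPFunCone

noncomputable def limitPFun (ρ : ∀ i, W →. S i) : W →. β :=
  fun w => ⟨∃ i, (ρ i w).Dom, fun h => (ρ h.choose w).get h.choose_spec⟩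

theorem mem_limitPFun_iff (hρ : IsPFunCone ρ) {w : W} {y : β} :
    y ∈ limitPFun ρ w ↔ ∃ i, ∃ z ∈ ρ i w, (z : β) = y := by
  constructor
  · rintro ⟨h, rfl⟩
    exact ⟨h.choose, _, Part.get_mem _, rfl⟩
  · rintro ⟨i, z, hz, rfl⟩
    have h : ∃ i, (ρ i w).Dom := ⟨i, Part.dom_iff_mem.2 ⟨z, hz⟩⟩
    exact ⟨h, hρ.coe_eq (Part.get_mem _) hz⟩

theorem IsPFunCone.toSubtype_comp_limitPFun (hρ : IsPFunCone ρ) (i : ι) :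
    (PFun.toSubtype (· ∈ S i) id).comp (limitPFun ρ) = ρ i := by
  refine PFun.ext fun w z => ?_
  simp only [PFun.mem_toSubtype_comp_iff, mem_limitPFun_iff hρ, id]
  constructor
  · rintro ⟨_, ⟨j, x, hx, rfl⟩, hxz⟩
    simpa [Subtype.ext_iff, hxz] using hρ.mem_of_mem hx (hxz ▸ z.2)
  · exact fun hz => ⟨z, ⟨i, z, hz, rfl⟩, rfl⟩

theorem IsPFunCone.isPHP_limitPFun {leW : W → W → Prop} {le : β → β → Prop}
    (hρ : IsPFunCone ρ) (hS : ∀ i, DownClosed le (S i))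
    (hphp : ∀ i, IsPHP leW (fun a b : S i => le a b) (ρ i)) : IsPHP leW le (limitPFun ρ) := by
  refine ⟨fun w v ⟨i, hw⟩ hvw => ⟨i, (hphp i).1 w v hw hvw⟩, histPres_iff_mem.2 ?_⟩
  rintro w y hy y'
  obtain ⟨i, z, hz, rfl⟩ := (mem_limitPFun_iff hρ).1 hy
  simp only [mem_limitPFun_iff hρ]
  constructor
  · rintro ⟨v, hvw, j, z', hz', rfl⟩
    obtain ⟨x, hx, hxz⟩ := hρ.exists_mem_of_le (le_sup_left : i ≤ i ⊔ j) hz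
    obtain ⟨x', hx', hxz'⟩ := hρ.exists_mem_of_le (le_sup_right : j ≤ i ⊔ j) hz'
    rw [← hxz, ← hxz']
    exact (histPres_iff_mem.1 (hphp _).2 w x hx x').1 ⟨v, hvw, hx'⟩
  · intro hy'
    obtain ⟨v, hvw, hv⟩ :=
      (histPres_iff_mem.1 (hphp i).2 w z hz ⟨y', hS i z.2 hy'⟩).2 hy'
    exact ⟨v, hvw, i, _, hv, rfl⟩

end Limit

theorem isPrefixOrder_xLe : IsPrefixOrder XLe := by
  refine ⟨?_, ?_, ?_, ?_⟩
  · rintro (_ | ⟨k, l⟩) <;> simp [XLe]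
  · rintro (_ | ⟨k, l⟩) (_ | ⟨k', l'⟩) (_ | ⟨k'', l''⟩) <;> grind [XLe]
  · rintro (_ | ⟨k, l⟩) (_ | ⟨k', l'⟩) <;> grind [XLe]
  · rintro (_ | ⟨k, l⟩) (_ | ⟨k', l'⟩) (_ | ⟨k'', l''⟩) <;> grind [XLe]

theorem isPrefixOrder_yLe : IsPrefixOrder YLe :=
  isPrefixOrder_xLe.comap _ Subtype.val_injective

theorem yS_mono : Monotone YS := by
  rintro n m hnm y (hy | ⟨k, l, hy, hlk, hkn⟩)
  · exact Or.inl hy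
  · exact Or.inr ⟨k, l, hy, hlk, hkn.trans_le hnm⟩

theorem downClosed_yS (n : ℕ) : DownClosed YLe (YS n) := by
  intro a b hb hab
  rcases ha : a.1 with _ | ⟨k, l⟩
  · exact Or.inl ha
  rcases hb with hb | ⟨k', l', hb, hlk, hkn⟩ <;> simp only [YLe, ha, hb, XLe] at hab
  exact Or.inr ⟨k, l, ha, by omega, by omega⟩

theorem exists_mem_yS (y : YT) : ∃ n, y ∈ YS n := by
  obtain ⟨_, rfl | ⟨k, l, rfl, hlk⟩⟩ := y
  · exact ⟨0, Or.inl rfl⟩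
  · exact ⟨k + 1, Or.inr ⟨k, l, rfl, hlk, k.lt_succ_self⟩⟩

theorem fmap_eq_toSubtype (n m : ℕ) : fmap n m = PFun.toSubtype (· ∈ YS n) Subtype.val := rfl

theorem fproj_eq_toSubtype (n : ℕ) : fproj n = PFun.toSubtype (· ∈ YS n) id := rfl

/-- the partial identities f_{n,m} : Y(m) → Y(n) form an inverse directed
family of partial history preserving maps whose projective limit is (isomorphic to) Y:
Y together with the partial identity projections is a projective limit of the family. -/
theorem stmt12 :
    -- Y is a prefix order
    IsPrefixOrder YLe ∧
    -- inverse directed family of partial history preserving maps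
    (∀ n : ℕ, fmap n n = PFun.id ↥(YS n)) ∧
    (∀ n m p : ℕ, n ≤ m → m ≤ p → fmap n p = (fmap n m).comp (fmap m p)) ∧
    (∀ n m : ℕ, n ≤ m →
      IsPHP (fun a b : ↥(YS m) => YLe a.1 b.1) (fun a b : ↥(YS n) => YLe a.1 b.1)
        (fmap n m)) ∧
    -- the projections form a cone
    (∀ n m : ℕ, n ≤ m → fproj n = (fmap n m).comp (fproj m)) ∧
    (∀ n : ℕ, IsPHP YLe (fun a b : ↥(YS n) => YLe a.1 b.1) (fproj n)) ∧
    -- and the cone is universal: Y is the projective limit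
    (∀ (W : Type) (leW : W → W → Prop), IsPrefixOrder leW →
      ∀ ρ : ∀ n : ℕ, W →. ↥(YS n),
        (∀ n : ℕ, IsPHP leW (fun a b : ↥(YS n) => YLe a.1 b.1) (ρ n)) →
        (∀ (n m : ℕ) (h : n ≤ m), ρ n = (fmap n m).comp (ρ m)) →
        ∃! u : W →. YT, IsPHP leW YLe u ∧ ∀ n : ℕ, ρ n = (fproj n).comp u) := by
  simp only [fmap_eq_toSubtype, fproj_eq_toSubtype]
  refine ⟨isPrefixOrder_yLe, fun n => PFun.toSubtype_val_self _,
    fun n m p hnm _ => (PFun.toSubtype_val_comp_toSubtype (yS_mono hnm) _).symm,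
    fun n m hnm => PFun.isPHP_toSubtype (downClosed_yS n) _ fun y hy => ⟨⟨y, yS_mono hnm hy⟩, rfl⟩,
    fun n m hnm => (PFun.toSubtype_val_comp_toSubtype (yS_mono hnm) _).symm,
    fun n => PFun.isPHP_toSubtype (downClosed_yS n) id fun y _ => ⟨y, rfl⟩, ?_⟩
  intro W leW _ ρ hphp (hρ : IsPFunCone ρ)
  refine ⟨limitPFun ρ, ⟨hρ.isPHP_limitPFun downClosed_yS hphp,
    fun n => (hρ.toSubtype_comp_limitPFun n).symm⟩, fun u ⟨_, hu⟩ => ?_⟩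
  exact PFun.eq_of_toSubtype_comp_eq exists_mem_yS fun n => by
    rw [← hu, hρ.toSubtype_comp_limitPFun]
end
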